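/- Consider the SIS model under multi-layer Markovian mobility, with F* = F(v), L* = L(v), and assume δ_i > 0 for at least one patch i. Set A = (L* + D)^{-1} B, M = I − F*, and H(p) = (I + A(diag(p) + (I − diag(p)) M))^{-1} A p. Suppose R₀ = ρ(A F*) > 1 and let u ≫ 0 be a Perron eigenvector, A F* u = R₀ u. Then there exists ε₀ > 0 such that for all ε ∈ (0, ε₀), the matrix I + A(diag(εu) + (I − diag(εu)) M) is invertible and H(εu) ≥ εu entrywise. -/

import Mathlib

open Matrix Finset Filter

namespace SISMobility

/-- Index type for (class, patch) pairs: `(α, i)` with `α ∈ {1,…,m}` a class and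
`i ∈ {1,…,n}` a patch. -/
abbrev Idx (n m : ℕ) := Fin m × Fin n

/-- A CTMC generator matrix: nonnegative off-diagonal entries and zero row sums
(so that the diagonal entry is minus the total outgoing rate). -/
def IsGenerator {n : ℕ} (Q : Matrix (Fin n) (Fin n) ℝ) : Prop :=
  (∀ i j, i ≠ j → 0 ≤ Q i j) ∧ ∀ i, ∑ j, Q i j = 0

/-- Strong connectivity of the digraph on `{1,…,n}` with an edge `(i,j)` whenever
`i ≠ j` and `Q i j > 0`. -/
def StronglyConnected {n : ℕ} (Q : Matrix (Fin n) (Fin n) ℝ) : Prop :=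
  ∀ i j : Fin n, Relation.ReflTransGen (fun a b => a ≠ b ∧ 0 < Q a b) i j

/-- The `nm × nm` block-diagonal infection-rate matrix `B` (m copies of `diag β`). -/
noncomputable def Bmat (n m : ℕ) (β : Fin n → ℝ) : Matrix (Idx n m) (Idx n m) ℝ :=
  Matrix.diagonal fun k => β k.2

/-- The `nm × nm` block-diagonal recovery-rate matrix `D` (m copies of `diag δ`). -/
noncomputable def Dmat (n m : ℕ) (δ : Fin n → ℝ) : Matrix (Idx n m) (Idx n m) ℝ :=
  Matrix.diagonal fun k => δ k.2

/-- The block-diagonal mobility matrix `L(x)`: the `α`-block has entries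
`l^α_{ii} = ∑_{j≠i} q^α_{ji} x^α_j / x^α_i` and `l^α_{ij} = -q^α_{ji} x^α_j / x^α_i`. -/
noncomputable def Lmat {n m : ℕ} (Q : Fin m → Matrix (Fin n) (Fin n) ℝ)
    (x : Idx n m → ℝ) : Matrix (Idx n m) (Idx n m) ℝ :=
  fun k l =>
    if k.1 = l.1 then
      if k.2 = l.2 then ∑ j ∈ Finset.univ.filter (· ≠ k.2), Q k.1 j k.2 * x (k.1, j) / x k
      else -(Q k.1 l.2 k.2 * x (k.1, l.2) / x k)
    else 0

/-- The population-fraction matrix `F(x)`: entry `((α,i),(γ,j))` equals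
`x^γ_i / ∑_η x^η_i` if `j = i` and `0` otherwise. -/
noncomputable def Fmat {n m : ℕ} (x : Idx n m → ℝ) : Matrix (Idx n m) (Idx n m) ℝ :=
  fun k l => if l.2 = k.2 then x (l.1, k.2) / ∑ η : Fin m, x (η, k.2) else 0

/-- Right-hand side of the infection dynamics
`ṗ = (B F(x) − D − L(x)) p − diag(p) B F(x) p`. -/
noncomputable def pRHS {n m : ℕ} (β δ : Fin n → ℝ) (Q : Fin m → Matrix (Fin n) (Fin n) ℝ)
    (x p : Idx n m → ℝ) : Idx n m → ℝ :=
  (Bmat n m β * Fmat x - Dmat n m δ - Lmat Q x).mulVec p -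
    (Matrix.diagonal p * (Bmat n m β * Fmat x)).mulVec p

/-- Right-hand side of the mobility dynamics `ẋ^α = (Q^α)ᵀ x^α`. -/
noncomputable def xRHS {n m : ℕ} (Q : Fin m → Matrix (Fin n) (Fin n) ℝ)
    (x : Idx n m → ℝ) : Idx n m → ℝ :=
  fun k => ∑ j, Q k.1 j k.2 * x (k.1, j)

/-- `(p, x)` is a solution of the SIS model under multi-layer Markovian mobility. -/
def IsSolution {n m : ℕ} (β δ : Fin n → ℝ) (Q : Fin m → Matrix (Fin n) (Fin n) ℝ)
    (p x : ℝ → Idx n m → ℝ) : Prop :=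
  ∀ t : ℝ, 0 ≤ t → ∀ k : Idx n m,
    HasDerivAt (fun s => p s k) (pRHS β δ Q (x t) (p t) k) t ∧
    HasDerivAt (fun s => x s k) (xRHS Q (x t) k) t

/-- The radial abscissa `μ(G)`: the largest real part of a (complex) eigenvalue of a
real matrix `G`. -/
noncomputable def muMax {ι : Type*} [Fintype ι] [DecidableEq ι] (G : Matrix ι ι ℝ) : ℝ :=
  sSup (Complex.re '' spectrum ℂ (G.map (algebraMap ℝ ℂ)))

/-- The spectral radius `ρ(G)` of a real matrix `G`. -/
noncomputable def specRad {ι : Type*} [Fintype ι] [DecidableEq ι] (G : Matrix ι ι ℝ) : ℝ :=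
  sSup ((fun z : ℂ => ‖z‖) '' spectrum ℂ (G.map (algebraMap ℝ ℂ)))

/-- The fixed-point map `H(p) = (I + A(diag p + (I − diag p) M))⁻¹ A p`. -/
noncomputable def Hfun {n m : ℕ} (A M : Matrix (Idx n m) (Idx n m) ℝ)
    (p : Idx n m → ℝ) : Idx n m → ℝ :=
  ((1 + A * (Matrix.diagonal p + (1 - Matrix.diagonal p) * M))⁻¹).mulVec (A.mulVec p)

end SISMobility

open SISMobility

/-!
With `C = L* + D`, the identity `C A = B` and `M = I - F*` give
`C (I + A (diag p + (I - diag p) M)) = W := C + B - B (I - diag p) F*`.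
For `0 < p ≤ 1`, `W` is a Z-matrix with row sums `δ_k + β_k p_k > 0`, so by the discrete minimum
principle it is invertible and `W z ≥ 0` forces `z ≥ 0`. Hence `H(p) = W⁻¹ B p`, and `H(p) ≥ p`
follows from `W p ≤ B p`. For `p = εu` the eigenrelation `B F* u = R₀ C u` reduces this to
`ε u_k ≤ 1 - 1/R₀`, which holds for small `ε`.
-/

theorem exists_pos_forall_mul_le {ι : Type*} [Fintype ι] {u : ι → ℝ} (hu : ∀ k, 0 ≤ u k)
    {c : ℝ} (hc : 0 < c) : ∃ ε₀ : ℝ, 0 < ε₀ ∧ ∀ k, ε₀ * u k ≤ c := by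
  have hS : 0 < 1 + ∑ k, u k := by linarith [sum_nonneg fun k (_ : k ∈ univ) => hu k]
  refine ⟨c / (1 + ∑ k, u k), div_pos hc hS, fun k => ?_⟩
  rw [div_mul_eq_mul_div, div_le_iff₀ hS]
  have := single_le_sum (fun k (_ : k ∈ univ) => hu k) (mem_univ k)
  nlinarith

section StrictlyDiagDominant

variable {ι : Type*} [Fintype ι]

structure Matrix.IsStrictlyDiagDominantZMatrix (W : Matrix ι ι ℝ) : Prop where
  offDiag_nonpos : ∀ k l, k ≠ l → W k l ≤ 0
  sum_row_pos : ∀ k, 0 < ∑ l, W k l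

namespace Matrix.IsStrictlyDiagDominantZMatrix

variable {W : Matrix ι ι ℝ}

/-- Discrete minimum principle: at a minimal entry `z k₀ < 0`,
`(W z) k₀ ≤ (∑ l, W k₀ l) z k₀ < 0`. -/
theorem nonneg_of_mulVec_nonneg (hW : W.IsStrictlyDiagDominantZMatrix) {z : ι → ℝ}
    (hz : 0 ≤ W *ᵥ z) : 0 ≤ z := by
  intro k
  show 0 ≤ z k
  obtain ⟨k₀, -, hmin⟩ := exists_min_image univ z ⟨k, mem_univ k⟩
  refine le_trans ?_ (hmin k (mem_univ k))
  by_contra! hneg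
  have hle : (W *ᵥ z) k₀ ≤ (∑ l, W k₀ l) * z k₀ := by
    rw [mulVec, dotProduct, sum_mul]
    refine sum_le_sum fun l _ => ?_
    rcases eq_or_ne k₀ l with rfl | hne
    · exact le_rfl
    · exact mul_le_mul_of_nonpos_left (hmin l (mem_univ l)) (hW.offDiag_nonpos k₀ l hne)
  linarith [show (0 : ℝ) ≤ (W *ᵥ z) k₀ from hz k₀, mul_neg_of_pos_of_neg (hW.sum_row_pos k₀) hneg]

variable [DecidableEq ι]

theorem isUnit_det (hW : W.IsStrictlyDiagDominantZMatrix) : IsUnit W.det := by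
  rw [isUnit_iff_ne_zero]
  intro hdet
  obtain ⟨z, hz, hWz⟩ := exists_mulVec_eq_zero_iff.mpr hdet
  have hnonneg := hW.nonneg_of_mulVec_nonneg hWz.ge
  have hnonpos := hW.nonneg_of_mulVec_nonneg (z := -z) (by rw [mulVec_neg, hWz, neg_zero])
  exact hz (le_antisymm (neg_nonneg.mp hnonpos) hnonneg)

theorem le_inv_mulVec_of_mulVec_le (hW : W.IsStrictlyDiagDominantZMatrix) {x y : ι → ℝ}
    (hxy : W *ᵥ x ≤ y) : x ≤ W⁻¹ *ᵥ y := by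
  have hWW : W * W⁻¹ = 1 := mul_nonsing_inv W hW.isUnit_det
  refine sub_nonneg.mp (hW.nonneg_of_mulVec_nonneg ?_)
  rwa [mulVec_sub, mulVec_mulVec, hWW, one_mulVec, sub_nonneg]

end Matrix.IsStrictlyDiagDominantZMatrix

variable [DecidableEq ι]

theorem isStrictlyDiagDominantZMatrix_add_diagonal_sub {C F : Matrix ι ι ℝ} {b p : ι → ℝ}
    (hC_off : ∀ k l, k ≠ l → C k l ≤ 0) (hC_row : ∀ k, 0 ≤ ∑ l, C k l)
    (hF : ∀ k l, 0 ≤ F k l) (hF_row : ∀ k, ∑ l, F k l = 1)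
    (hb : ∀ k, 0 < b k) (hp_pos : ∀ k, 0 < p k) (hp_le : ∀ k, p k ≤ 1) :
    (C + diagonal b - diagonal b * ((1 - diagonal p) * F)).IsStrictlyDiagDominantZMatrix := by
  have hentry : ∀ k l, (C + diagonal b - diagonal b * ((1 - diagonal p) * F)) k l =
      C k l + diagonal b k l - b k * (1 - p k) * F k l := by
    intro k l
    rw [Matrix.sub_apply, diagonal_mul, sub_mul, one_mul, Matrix.sub_apply, diagonal_mul,
      Matrix.add_apply]
    ring
  constructor
  · intro k l hkl
    rw [hentry, diagonal_apply_ne _ hkl, add_zero]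
    have := mul_nonneg (mul_nonneg (hb k).le (sub_nonneg.mpr (hp_le k))) (hF k l)
    linarith [hC_off k l hkl]
  · intro k
    have hrow : ∑ l, (C + diagonal b - diagonal b * ((1 - diagonal p) * F)) k l =
        ∑ l, C k l + b k * p k := by
      simp only [hentry, sum_sub_distrib, sum_add_distrib, ← mul_sum, hF_row, diagonal_apply,
        sum_ite_eq, mem_univ, if_true]
      ring
    rw [hrow]
    linarith [hC_row k, mul_pos (hb k) (hp_pos k)]

theorem mul_one_add_mul_one_sub {R : Type*} [Ring R] {C A B : R} (hCA : C * A = B) (P F : R) :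
    C * (1 + A * (P + (1 - P) * (1 - F))) = C + B - B * ((1 - P) * F) := by
  rw [mul_add, mul_one, ← mul_assoc, hCA]
  noncomm_ring

/-- For singular `C` the junk value `C⁻¹ = 0` would leave no eigenvector with nonzero eigenvalue. -/
theorem isUnit_det_of_inv_mul_mulVec_eq_smul {C B F : Matrix ι ι ℝ} {u : ι → ℝ} {R : ℝ}
    (hu : ∀ k, 0 < u k) (hR : R ≠ 0) (heig : (C⁻¹ * B * F) *ᵥ u = R • u) : IsUnit C.det := by
  rcases isEmpty_or_nonempty ι with hι | ⟨⟨k⟩⟩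
  · simp [det_isEmpty]
  by_contra hC
  rw [nonsing_inv_apply_not_isUnit C hC, zero_mul, zero_mul, zero_mulVec] at heig
  have := congrFun heig k
  simp only [Pi.zero_apply, Pi.smul_apply, smul_eq_mul, zero_eq_mul] at this
  exact this.elim hR (hu k).ne'

theorem isUnit_det_and_le_inv_mulVec {C F : Matrix ι ι ℝ} {b p : ι → ℝ} {R : ℝ}
    (hC_off : ∀ k l, k ≠ l → C k l ≤ 0) (hC_row : ∀ k, 0 ≤ ∑ l, C k l) (hC : IsUnit C.det)
    (hF : ∀ k l, 0 ≤ F k l) (hF_row : ∀ k, ∑ l, F k l = 1) (hb : ∀ k, 0 < b k)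
    (hR : 0 < R) (heig : (C⁻¹ * diagonal b * F) *ᵥ p = R • p)
    (hp_pos : ∀ k, 0 < p k) (hp_le : ∀ k, p k ≤ 1 - R⁻¹) :
    let A := C⁻¹ * diagonal b
    let T := 1 + A * (diagonal p + (1 - diagonal p) * (1 - F))
    IsUnit T.det ∧ p ≤ T⁻¹ *ᵥ (A *ᵥ p) := by
  intro A T
  have hCA : C * A = diagonal b := mul_nonsing_inv_cancel_left C _ hC
  set W := C + diagonal b - diagonal b * ((1 - diagonal p) * F)
  have hW : W.IsStrictlyDiagDominantZMatrix :=
    isStrictlyDiagDominantZMatrix_add_diagonal_sub hC_off hC_row hF hF_row hb hp_pos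
      fun k => (hp_le k).trans (sub_le_self _ (inv_pos.mpr hR).le)
  have hCT : C * T = W := mul_one_add_mul_one_sub hCA _ _
  have hTinv : (W⁻¹ * C) * T = 1 := by rw [mul_assoc, hCT, nonsing_inv_mul W hW.isUnit_det]
  refine ⟨isUnit_det_of_left_inverse hTinv, ?_⟩
  rw [inv_eq_left_inv hTinv, ← mulVec_mulVec, mulVec_mulVec p C A, hCA]
  refine hW.le_inv_mulVec_of_mulVec_le fun k => ?_
  -- `B F p = R C p` turns `(W p) k ≤ (B p) k` into `p k ≤ 1 - R⁻¹`
  have hBFp : diagonal b *ᵥ (F *ᵥ p) = R • C *ᵥ p := by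
    change (A * F) *ᵥ p = R • p at heig
    rw [mulVec_mulVec, ← hCA, mul_assoc, ← mulVec_mulVec, heig, mulVec_smul]
  have hWp : (W *ᵥ p) k = (C *ᵥ p) k + b k * p k - b k * ((1 - p k) * (F *ᵥ p) k) := by
    simp only [W, sub_mulVec, add_mulVec, ← mulVec_mulVec, one_mulVec, Pi.sub_apply,
      Pi.add_apply, mulVec_diagonal]
    ring
  have hBFp_k : b k * (F *ᵥ p) k = R * (C *ᵥ p) k := by
    simpa only [mulVec_diagonal, Pi.smul_apply, smul_eq_mul] using congrFun hBFp k
  have hFp : 0 ≤ (F *ᵥ p) k := sum_nonneg fun l _ => mul_nonneg (hF k l) (hp_pos l).le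
  have hCp : 0 ≤ (C *ᵥ p) k := by nlinarith [mul_nonneg (hb k).le hFp]
  have hRp : 1 ≤ R * (1 - p k) := by
    have := mul_le_mul_of_nonneg_left (hp_le k) hR.le
    rw [mul_sub, mul_inv_cancel₀ hR.ne'] at this
    linarith
  rw [hWp, mulVec_diagonal]
  nlinarith [mul_le_mul_of_nonneg_left hRp hCp]

end StrictlyDiagDominant

namespace SISMobility

variable {n m : ℕ}

theorem sum_Lmat_row (Q : Fin m → Matrix (Fin n) (Fin n) ℝ) (x : Idx n m → ℝ) (k : Idx n m) :
    ∑ l, Lmat Q x k l = 0 := by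
  rw [Fintype.sum_prod_type, sum_eq_single k.1 (fun γ _ hγ => by simp [Lmat, Ne.symm hγ])
    (by simp)]
  simp only [Lmat, if_true]
  rw [← add_sum_erase _ _ (mem_univ k.2), if_pos rfl, ← filter_ne', ← sum_add_distrib]
  exact sum_eq_zero fun j hj => by simp [(mem_filter.mp hj).2.symm]

theorem Lmat_apply_nonpos {Q : Fin m → Matrix (Fin n) (Fin n) ℝ}
    (hQ : ∀ α i j, i ≠ j → 0 ≤ Q α i j) {x : Idx n m → ℝ} (hx : ∀ k, 0 ≤ x k)
    {k l : Idx n m} (hkl : k ≠ l) : Lmat Q x k l ≤ 0 := by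
  unfold Lmat
  split_ifs with h₁ h₂
  · exact absurd (Prod.ext h₁ h₂) hkl
  · exact neg_nonpos.mpr (div_nonneg (mul_nonneg (hQ _ _ _ (Ne.symm h₂)) (hx _)) (hx _))
  · exact le_rfl

theorem Fmat_nonneg {x : Idx n m → ℝ} (hx : ∀ k, 0 ≤ x k) (k l : Idx n m) : 0 ≤ Fmat x k l := by
  unfold Fmat
  split_ifs
  · exact div_nonneg (hx _) (sum_nonneg fun η _ => hx _)
  · exact le_rfl

theorem sum_Fmat_row {x : Idx n m → ℝ} (hx : ∀ k, 0 < x k) (k : Idx n m) :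
    ∑ l, Fmat x k l = 1 := by
  have hS : 0 < ∑ η, x (η, k.2) := sum_pos (fun η _ => hx _) ⟨k.1, mem_univ _⟩
  simp only [Fmat, Fintype.sum_prod_type, sum_ite_eq', mem_univ, if_true, ← sum_div]
  exact div_self hS.ne'

end SISMobility

theorem Hfun_ge_eps_u_general
    (n m : ℕ)
    (Q : Fin m → Matrix (Fin n) (Fin n) ℝ)
    (hQgen : ∀ α, IsGenerator (Q α))
    (β δ : Fin n → ℝ) (hβ : ∀ i, 0 < β i) (hδ : ∀ i, 0 ≤ δ i)
    (vα : Fin m → Fin n → ℝ) (hvαpos : ∀ α i, 0 < vα α i)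
    (Npop : Fin m → ℝ) (hNpop : ∀ α, 0 < Npop α)
    (v : Idx n m → ℝ) (hv : ∀ k, v k = Npop k.1 * vα k.1 k.2)
    (A M : Matrix (Idx n m) (Idx n m) ℝ)
    (hA : A = (Lmat Q v + Dmat n m δ)⁻¹ * Bmat n m β)
    (hM : M = 1 - Fmat v)
    (R0 : ℝ) (hR0gt : 1 < R0)
    (u : Idx n m → ℝ) (hu : ∀ k, 0 < u k)
    (hueig : (A * Fmat v).mulVec u = R0 • u) :
    ∃ ε₀ : ℝ, 0 < ε₀ ∧ ∀ ε : ℝ, 0 < ε → ε < ε₀ →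
      IsUnit (1 + A * (Matrix.diagonal (ε • u) +
        (1 - Matrix.diagonal (ε • u)) * M)).det ∧
      ∀ k, ε * u k ≤ Hfun A M (ε • u) k := by
  have hv_pos : ∀ k, 0 < v k := fun k => hv k ▸ mul_pos (hNpop k.1) (hvαpos k.1 k.2)
  have hR0 : 0 < R0 := one_pos.trans hR0gt
  subst hA hM
  set C := Lmat Q v + Dmat n m δ
  have hC_off : ∀ k l, k ≠ l → C k l ≤ 0 := fun k l hkl => by
    simpa [C, Dmat, diagonal_apply_ne _ hkl] using
      Lmat_apply_nonpos (fun α => (hQgen α).1) (fun k => (hv_pos k).le) hkl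
  have hC_row : ∀ k, 0 ≤ ∑ l, C k l := fun k => by
    simpa [C, Dmat, sum_add_distrib, sum_Lmat_row, diagonal_apply] using hδ k.2
  have hC : IsUnit C.det := isUnit_det_of_inv_mul_mulVec_eq_smul hu hR0.ne' hueig
  obtain ⟨ε₀, hε₀, hε₀u⟩ := exists_pos_forall_mul_le (fun k => (hu k).le)
    (sub_pos.mpr (inv_lt_one_of_one_lt₀ hR0gt))
  refine ⟨ε₀, hε₀, fun ε hε hεε₀ => ?_⟩
  have heig : (C⁻¹ * Bmat n m β * Fmat v) *ᵥ (ε • u) = R0 • (ε • u) := by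
    rw [mulVec_smul, hueig, smul_comm]
  exact isUnit_det_and_le_inv_mulVec hC_off hC_row hC (Fmat_nonneg fun k => (hv_pos k).le)
    (sum_Fmat_row hv_pos) (fun k => hβ k.2) hR0 heig (fun k => mul_pos hε (hu k))
    (fun k => (mul_le_mul_of_nonneg_right hεε₀.le (hu k).le).trans (hε₀u k))

/-- with `A = (L* + D)⁻¹ B`, `M = I − F*`, suppose
`R₀ = ρ(A F*) > 1` and `u ≫ 0` is a Perron eigenvector, `A F* u = R₀ u`. Then there
is `ε₀ > 0` such that for all `ε ∈ (0, ε₀)` the matrix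
`I + A(diag(εu) + (I − diag(εu))M)` is invertible and `H(εu) ≥ εu` entrywise. -/
theorem Hfun_ge_eps_u
    (n m : ℕ) (hn : 2 ≤ n) (hm : 1 ≤ m)
    (Q : Fin m → Matrix (Fin n) (Fin n) ℝ)
    (hQgen : ∀ α, IsGenerator (Q α)) (hQirr : ∀ α, StronglyConnected (Q α))
    (β δ : Fin n → ℝ) (hβ : ∀ i, 0 < β i) (hδ : ∀ i, 0 ≤ δ i)
    (hδpos : ∃ i, 0 < δ i)
    (vα : Fin m → Fin n → ℝ) (hvαpos : ∀ α i, 0 < vα α i)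
    (hvαnorm : ∀ α, ∑ i, vα α i = 1)
    (hvαeig : ∀ α i, ∑ j, Q α j i * vα α j = 0)
    (Npop : Fin m → ℝ) (hNpop : ∀ α, 0 < Npop α)
    (v : Idx n m → ℝ) (hv : ∀ k, v k = Npop k.1 * vα k.1 k.2)
    (A M : Matrix (Idx n m) (Idx n m) ℝ)
    (hA : A = (Lmat Q v + Dmat n m δ)⁻¹ * Bmat n m β)
    (hM : M = 1 - Fmat v)
    (R0 : ℝ) (hR0 : R0 = specRad (A * Fmat v)) (hR0gt : 1 < R0)
    (u : Idx n m → ℝ) (hu : ∀ k, 0 < u k)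
    (hueig : (A * Fmat v).mulVec u = R0 • u) :
    ∃ ε₀ : ℝ, 0 < ε₀ ∧ ∀ ε : ℝ, 0 < ε → ε < ε₀ →
      IsUnit (1 + A * (Matrix.diagonal (ε • u) +
        (1 - Matrix.diagonal (ε • u)) * M)).det ∧
      ∀ k, ε * u k ≤ Hfun A M (ε • u) k :=
  Hfun_ge_eps_u_general n m Q hQgen β δ hβ hδ vα hvαpos Npop hNpop v hv A M hA hM R0 hR0gt u hu
    hueig
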